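/- Let g be a finite-dimensional real Lie algebra with a biinvariant inner product Q, let L ⊆ g be a linear subspace, and set L₁ := [L, g]. Then the linear span I of L, L₁, and [L₁, L₁] is an ideal of g, and I is the smallest ideal of g containing L. -/

import Mathlib

/-- The span of all brackets `⁅a, b⁆` with `a ∈ A`, `b ∈ B`. -/
def bracketSpan {g : Type*} [LieRing g] [LieAlgebra ℝ g]
    (A B : Submodule ℝ g) : Submodule ℝ g :=
  Submodule.span ℝ {z | ∃ a ∈ A, ∃ b ∈ B, z = ⁅a, b⁆}

/-!
Since `Q` is positive definite, `g = L₁ ⊕ L₁^⊥`. Invariance of `Q` gives `[L, L₁^⊥] = 0`, and then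
the Jacobi identity gives `[L₁^⊥, L₁] ⊆ L₁`; hence `[g, L₁] ⊆ L₁ + [L₁, L₁]`, which makes
`L₁ + [L₁, L₁]` an ideal, and `I = L + (L₁ + [L₁, L₁])` one as well.
-/

open LinearMap (BilinForm)

section LieAlgebra

variable {g : Type*} [LieRing g] [LieAlgebra ℝ g]

lemma lie_mem_bracketSpan {A B : Submodule ℝ g} {a b : g} (ha : a ∈ A) (hb : b ∈ B) :
    ⁅a, b⁆ ∈ bracketSpan A B :=
  Submodule.subset_span ⟨a, ha, b, hb, rfl⟩

lemma bracketSpan_le_iff {A B C : Submodule ℝ g} :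
    bracketSpan A B ≤ C ↔ ∀ a ∈ A, ∀ b ∈ B, ⁅a, b⁆ ∈ C := by
  rw [bracketSpan, Submodule.span_le]
  exact ⟨fun h a ha b hb => h ⟨a, ha, b, hb, rfl⟩, fun h _ ⟨a, ha, b, hb, hz⟩ => hz ▸ h a ha b hb⟩

lemma bracketSpan_le_of_left_le_lieIdeal {A B : Submodule ℝ g} {J : LieIdeal ℝ g}
    (hA : A ≤ J.toSubmodule) : bracketSpan A B ≤ J.toSubmodule :=
  bracketSpan_le_iff.2 fun a ha b _ => by
    rw [← lie_skew]
    exact neg_mem (J.lie_mem (hA ha))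

lemma bracketSpan_le_of_right_le_lieIdeal {A B : Submodule ℝ g} {J : LieIdeal ℝ g}
    (hB : B ≤ J.toSubmodule) : bracketSpan A B ≤ J.toSubmodule :=
  bracketSpan_le_iff.2 fun _ _ _ hb => J.lie_mem (hB hb)

lemma lie_mem_bracketSpan_top_of_forall_lie_eq_zero {L : Submodule ℝ g} {w u : g}
    (hw : ∀ a ∈ L, ⁅a, w⁆ = 0) (hu : u ∈ bracketSpan L ⊤) : ⁅w, u⁆ ∈ bracketSpan L ⊤ := by
  suffices bracketSpan L ⊤ ≤ (bracketSpan L ⊤).comap (LieAlgebra.ad ℝ g w) from this hu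
  refine bracketSpan_le_iff.2 fun a ha y _ => ?_
  have hwa : ⁅w, a⁆ = 0 := by rw [← lie_skew, hw a ha, neg_zero]
  rw [Submodule.mem_comap, LieAlgebra.ad_apply, leibniz_lie, hwa, zero_lie, zero_add]
  exact lie_mem_bracketSpan ha Submodule.mem_top

lemma lie_mem_sup_bracketSpan_self {N : Submodule ℝ g}
    (hN : ∀ x : g, ∀ u ∈ N, ⁅x, u⁆ ∈ N ⊔ bracketSpan N N) (x : g) {y : g}
    (hy : y ∈ N ⊔ bracketSpan N N) : ⁅x, y⁆ ∈ N ⊔ bracketSpan N N := by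
  have hN' : ∀ u ∈ N, ∀ z : g, ⁅u, z⁆ ∈ N ⊔ bracketSpan N N := fun u hu z => by
    rw [← lie_skew]
    exact neg_mem (hN z u hu)
  suffices N ⊔ bracketSpan N N ≤ (N ⊔ bracketSpan N N).comap (LieAlgebra.ad ℝ g x) from this hy
  refine sup_le (fun u hu => hN x u hu) (bracketSpan_le_iff.2 fun u hu v hv => ?_)
  rw [Submodule.mem_comap, LieAlgebra.ad_apply, leibniz_lie, ← lie_skew ⁅x, u⁆]
  exact add_mem (neg_mem (hN' v hv _)) (hN' u hu _)

lemma lie_mem_sup_of_lie_mem {A M : Submodule ℝ g} (hA : ∀ x : g, ∀ a ∈ A, ⁅x, a⁆ ∈ M)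
    (hM : ∀ x : g, ∀ m ∈ M, ⁅x, m⁆ ∈ M) (x : g) {y : g} (hy : y ∈ A ⊔ M) : ⁅x, y⁆ ∈ A ⊔ M :=
  have : A ⊔ M ≤ (A ⊔ M).comap (LieAlgebra.ad ℝ g x) :=
    sup_le (fun a ha => Submodule.mem_sup_right (hA x a ha))
      (fun m hm => Submodule.mem_sup_right (hM x m hm))
  this hy

end LieAlgebra

lemma LinearMap.BilinForm.isCompl_orthogonal_of_pos {V : Type*} [AddCommGroup V] [Module ℝ V]
    [FiniteDimensional ℝ V] {Q : BilinForm ℝ V} (hrefl : Q.IsRefl)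
    (hpos : ∀ x : V, x ≠ 0 → 0 < Q x x) (W : Submodule ℝ V) : IsCompl W (Q.orthogonal W) :=
  (Q.isCompl_orthogonal_iff_disjoint hrefl).2 <| Submodule.disjoint_def.2 fun x hx hx' =>
    by_contra fun hx0 => (hpos x hx0).ne' (hx' x hx)

section Invariant

variable {g : Type*} [LieRing g] [LieAlgebra ℝ g] {Q : BilinForm ℝ g}

lemma lie_eq_zero_of_mem_orthogonal_bracketSpan_top (hpos : ∀ x : g, x ≠ 0 → 0 < Q x x)
    (hbi : ∀ z x y : g, Q ⁅z, x⁆ y + Q x ⁅z, y⁆ = 0) {L : Submodule ℝ g} {a w : g} (ha : a ∈ L)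
    (hw : w ∈ Q.orthogonal (bracketSpan L ⊤)) : ⁅a, w⁆ = 0 := by
  by_contra h
  have horth : Q ⁅a, ⁅a, w⁆⁆ w = 0 := hw _ (lie_mem_bracketSpan ha Submodule.mem_top)
  have := hbi a ⁅a, w⁆ w
  linarith [hpos _ h]

lemma lie_mem_sup_bracketSpan_of_mem_bracketSpan_top [FiniteDimensional ℝ g] (hrefl : Q.IsRefl)
    (hpos : ∀ x : g, x ≠ 0 → 0 < Q x x) (hbi : ∀ z x y : g, Q ⁅z, x⁆ y + Q x ⁅z, y⁆ = 0)
    {L : Submodule ℝ g} (x : g) {u : g} (hu : u ∈ bracketSpan L ⊤) :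
    ⁅x, u⁆ ∈ bracketSpan L ⊤ ⊔ bracketSpan (bracketSpan L ⊤) (bracketSpan L ⊤) := by
  have hx : x ∈ bracketSpan L ⊤ ⊔ Q.orthogonal (bracketSpan L ⊤) := by
    simp [(Q.isCompl_orthogonal_of_pos hrefl hpos _).sup_eq_top]
  obtain ⟨v, hv, w, hw, rfl⟩ := Submodule.mem_sup.1 hx
  rw [add_lie, add_comm]
  refine Submodule.add_mem_sup ?_ (lie_mem_bracketSpan hv hu)
  exact lie_mem_bracketSpan_top_of_forall_lie_eq_zero
    (fun a ha => lie_eq_zero_of_mem_orthogonal_bracketSpan_top hpos hbi ha hw) hu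

end Invariant

/-- Let `g` be a finite-dimensional real Lie algebra with a biinvariant inner product `Q`,
`L ⊆ g` a linear subspace and `L₁ := [L, g]`.  Then the linear span `I` of `L`, `L₁` and
`[L₁, L₁]` is an ideal of `g`, and `I` is the smallest ideal of `g` containing `L`. -/
theorem span_L_L1_bracket_is_smallest_ideal
    (g : Type*) [LieRing g] [LieAlgebra ℝ g] [FiniteDimensional ℝ g]
    (Q : LinearMap.BilinForm ℝ g)
    (hsymm : ∀ x y : g, Q x y = Q y x)
    (hpos : ∀ x : g, x ≠ 0 → 0 < Q x x)
    (hbi : ∀ z x y : g, Q ⁅z, x⁆ y + Q x ⁅z, y⁆ = 0)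
    (L L₁ I : Submodule ℝ g)
    (hL₁ : L₁ = bracketSpan L ⊤)
    (hI : I = L ⊔ L₁ ⊔ bracketSpan L₁ L₁) :
    (∀ x : g, ∀ y ∈ I, ⁅x, y⁆ ∈ I) ∧
      (∀ J : LieIdeal ℝ g, L ≤ J.toSubmodule → I ≤ J.toSubmodule) := by
  subst hL₁ hI
  refine ⟨fun x y hy => ?_, fun J hLJ => ?_⟩
  · have hrefl : Q.IsRefl := fun x y h => (hsymm y x).trans h
    have hL : ∀ x : g, ∀ a ∈ L, ⁅x, a⁆ ∈ bracketSpan L ⊤ := fun x a ha => by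
      rw [← lie_skew]
      exact neg_mem (lie_mem_bracketSpan ha Submodule.mem_top)
    rw [sup_assoc] at hy ⊢
    exact lie_mem_sup_of_lie_mem (fun x a ha => Submodule.mem_sup_left (hL x a ha))
      (lie_mem_sup_bracketSpan_self fun x _ hu =>
        lie_mem_sup_bracketSpan_of_mem_bracketSpan_top hrefl hpos hbi x hu) x hy
  · have hL₁J := bracketSpan_le_of_left_le_lieIdeal (B := ⊤) hLJ
    exact sup_le (sup_le hLJ hL₁J) (bracketSpan_le_of_right_le_lieIdeal hL₁J)
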